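/- (Multiplicative domain) Let A and B be unital C*-algebras and Φ : A → B a unital completely positive linear map. Suppose a ∈ A satisfies Φ(a* a) = Φ(a)* Φ(a) and Φ(a a*) = Φ(a) Φ(a)*. Then for every x ∈ A one has Φ(a x) = Φ(a) Φ(x) and Φ(x a) = Φ(x) Φ(a). -/

import Mathlib

/-!
Complete positivity applied to the Gram matrix of `1, b, x` writes `Φ (star (eᵢ) * eⱼ)` as
`star (cᵢ) ⬝ᵥ cⱼ` for vectors `c₀, c₁, c₂ ∈ B³`. The hypothesis `Φ (star b * b) = star (Φ b) * Φ b`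
is the equality case of the Cauchy–Schwarz inequality for `c₀` (a unit vector) and `c₁`, which
forces `c₁ = c₀ · Φ b`; pairing with `c₂` gives `Φ (star b * x) = star (Φ b) * Φ x`. Positive
maps are star-preserving, so taking adjoints turns this into multiplicativity on either side.
-/

open Matrix

def IsCompletelyPositive {A B : Type*} [NonUnitalSemiring A] [StarRing A] [Module ℂ A]
    [NonUnitalSemiring B] [StarRing B] [Module ℂ B] (Φ : A →ₗ[ℂ] B) : Prop :=
  ∀ (n : ℕ) (M : Matrix (Fin n) (Fin n) A),
    (∃ x : Matrix (Fin n) (Fin n) A, M = star x * x) →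
      ∃ y : Matrix (Fin n) (Fin n) B, M.map Φ = star y * y

section DotProduct

variable {B n : Type*} [Fintype n]

theorem dotProduct_mul_right [NonUnitalSemiring B] (v u : n → B) (a : B) :
    v ⬝ᵥ (fun k => u k * a) = (v ⬝ᵥ u) * a := by
  simp [dotProduct, Finset.sum_mul, mul_assoc]

theorem star_mul_right_dotProduct [NonUnitalSemiring B] [StarRing B] (u w : n → B) (a : B) :
    star (fun k => u k * a) ⬝ᵥ w = star a * (star u ⬝ᵥ w) := by
  simp [dotProduct, Finset.mul_sum, mul_assoc]

theorem CStarRing.dotProduct_star_self_eq_zero [NonUnitalNormedRing B] [StarRing B] [CStarRing B]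
    [PartialOrder B] [StarOrderedRing B] {v : n → B} : star v ⬝ᵥ v = 0 ↔ v = 0 :=
  (Fintype.sum_eq_zero_iff_of_nonneg fun _ => star_mul_self_nonneg _).trans <| by
    simp [funext_iff]

/-- The equality case of the Cauchy–Schwarz inequality in the Hilbert module `Bⁿ`. -/
theorem eq_mul_of_star_dotProduct_self_eq [NormedRing B] [StarRing B] [CStarRing B]
    [PartialOrder B] [StarOrderedRing B] {u v : n → B} (hu : star u ⬝ᵥ u = 1)
    (hv : star v ⬝ᵥ v = star (star u ⬝ᵥ v) * (star u ⬝ᵥ v)) :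
    v = fun k => u k * (star u ⬝ᵥ v) := by
  set c := star u ⬝ᵥ v
  have hvu : star v ⬝ᵥ u = star c := star_dotProduct v u
  rw [← sub_eq_zero, ← CStarRing.dotProduct_star_self_eq_zero, star_sub, sub_dotProduct,
    dotProduct_sub, dotProduct_sub, dotProduct_mul_right, dotProduct_mul_right,
    star_mul_right_dotProduct, star_mul_right_dotProduct, hu, hvu, hv, mul_one]
  simp [c]

end DotProduct

namespace IsCompletelyPositive

variable {A B : Type*}

theorem exists_gram_map_gram [NonUnitalSemiring A] [StarRing A] [Module ℂ A]
    [NonUnitalSemiring B] [StarRing B] [Module ℂ B] {Φ : A →ₗ[ℂ] B} (hΦ : IsCompletelyPositive Φ)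
    {n : ℕ} (e : Fin (n + 1) → A) :
    ∃ c : Fin (n + 1) → Fin (n + 1) → B, ∀ i j, Φ (star (e i) * e j) = star (c i) ⬝ᵥ c j := by
  obtain ⟨y, hy⟩ := hΦ (n + 1) (of fun i j => star (e i) * e j)
    ⟨of fun i j => if i = 0 then e j else 0, by ext i j; simp [mul_apply, star_apply]⟩
  exact ⟨yᵀ, fun i j => by simpa [mul_apply, star_apply, dotProduct] using congrFun₂ hy i j⟩

theorem map_star_mul_of_map_star_mul_self [Semiring A] [StarRing A] [Module ℂ A]
    [CStarAlgebra B] {Φ : A →ₗ[ℂ] B} (hΦ : IsCompletelyPositive Φ) (hΦ1 : Φ 1 = 1) {b : A}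
    (hb : Φ (star b * b) = star (Φ b) * Φ b) (x : A) :
    Φ (star b * x) = star (Φ b) * Φ x := by
  let := CStarAlgebra.spectralOrder B
  have := CStarAlgebra.spectralOrderedRing B
  obtain ⟨c, hc⟩ := hΦ.exists_gram_map_gram ![1, b, x]
  have h00 : star (c 0) ⬝ᵥ c 0 = 1 := by simpa [hΦ1] using (hc 0 0).symm
  have h01 : star (c 0) ⬝ᵥ c 1 = Φ b := by simpa using (hc 0 1).symm
  have h11 : star (c 1) ⬝ᵥ c 1 = star (Φ b) * Φ b := by simpa [hb] using (hc 1 1).symm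
  have hc1 := eq_mul_of_star_dotProduct_self_eq h00 (by rw [h11, h01])
  rw [h01] at hc1
  calc Φ (star b * x) = star (c 1) ⬝ᵥ c 2 := by simpa using hc 1 2
    _ = star (Φ b) * (star (c 0) ⬝ᵥ c 2) := by rw [hc1, star_mul_right_dotProduct]
    _ = star (Φ b) * Φ x := by simpa using congrArg _ (hc 0 2).symm

theorem map_nonneg [CStarAlgebra A] [PartialOrder A] [StarOrderedRing A] [NonUnitalRing B]
    [StarRing B] [Module ℂ B] [PartialOrder B] [StarOrderedRing B] {Φ : A →ₗ[ℂ] B}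
    (hΦ : IsCompletelyPositive Φ) {p : A} (hp : 0 ≤ p) : 0 ≤ Φ p := by
  obtain ⟨u, rfl⟩ := CStarAlgebra.nonneg_iff_eq_star_mul_self.mp hp
  obtain ⟨c, hc⟩ := hΦ.exists_gram_map_gram ![u]
  have hu := hc 0 0
  simp only [cons_val_zero] at hu
  exact hu ▸ dotProduct_star_self_nonneg (c 0)

variable [CStarAlgebra A] [CStarAlgebra B] {Φ : A →ₗ[ℂ] B}

theorem map_star (hΦ : IsCompletelyPositive Φ) (x : A) : Φ (star x) = star (Φ x) := by
  let := CStarAlgebra.spectralOrder A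
  have := CStarAlgebra.spectralOrderedRing A
  let := CStarAlgebra.spectralOrder B
  have := CStarAlgebra.spectralOrderedRing B
  exact StarHomClass.map_star (PositiveLinearMap.mk₀ Φ fun _ => hΦ.map_nonneg) x

theorem map_mul_of_map_star_mul_self (hΦ : IsCompletelyPositive Φ) (hΦ1 : Φ 1 = 1) {b : A}
    (hb : Φ (star b * b) = star (Φ b) * Φ b) (x : A) : Φ (x * b) = Φ x * Φ b := by
  calc Φ (x * b) = star (Φ (star b * star x)) := by
        rw [← hΦ.map_star, star_mul, star_star, star_star]
    _ = Φ x * Φ b := by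
      rw [hΦ.map_star_mul_of_map_star_mul_self hΦ1 hb, hΦ.map_star]
      simp only [star_mul, star_star]

theorem map_mul_of_map_mul_star_self (hΦ : IsCompletelyPositive Φ) (hΦ1 : Φ 1 = 1) {b : A}
    (hb : Φ (b * star b) = Φ b * star (Φ b)) (x : A) : Φ (b * x) = Φ b * Φ x := by
  have hb' : Φ (star (star b) * star b) = star (Φ (star b)) * Φ (star b) := by
    rw [star_star, hΦ.map_star, star_star, hb]
  simpa [hΦ.map_star] using hΦ.map_star_mul_of_map_star_mul_self hΦ1 hb' x

end IsCompletelyPositive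

theorem multiplicative_domain
    {A B : Type*} [CStarAlgebra A] [CStarAlgebra B]
    (Φ : A →ₗ[ℂ] B) (hΦ1 : Φ 1 = 1)
    (hΦcp : ∀ (n : ℕ) (M : Matrix (Fin n) (Fin n) A),
      (∃ x : Matrix (Fin n) (Fin n) A, M = star x * x) →
        ∃ y : Matrix (Fin n) (Fin n) B, M.map Φ = star y * y)
    (a : A)
    (ha₁ : Φ (star a * a) = star (Φ a) * Φ a)
    (ha₂ : Φ (a * star a) = Φ a * star (Φ a)) :
    ∀ x : A, Φ (a * x) = Φ a * Φ x ∧ Φ (x * a) = Φ x * Φ a := by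
  have hΦ : IsCompletelyPositive Φ := hΦcp
  exact fun x => ⟨hΦ.map_mul_of_map_mul_star_self hΦ1 ha₂ x,
    hΦ.map_mul_of_map_star_mul_self hΦ1 ha₁ x⟩
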